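/- Let 0 ≤ p ≤ 1, let Z = diag(1, −1) be the 2×2 Pauli-Z matrix, and define the channel Φ(ρ) = p Z ρ Z + (1−p) ρ on 2×2 matrices. Then inf over 2×2 density matrices ρ of F(Φ(ρ), ρ)² = 1 − p; equivalently, the fidelity-based maximal disturbance D_F^max(Φ) = 1 − (inf over density matrices ρ of F(Φ(ρ), ρ))² equals p. -/

import Mathlib

open scoped BigOperators ComplexOrder
open Matrix

noncomputable section

/-- A projective observable: a finite family of mutually orthogonal
self-adjoint idempotents summing to the identity. -/
def IsProjObs {d r : ℕ} (P : Fin r → Matrix (Fin d) (Fin d) ℂ) : Prop :=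
  (∀ i, (P i).IsHermitian) ∧ (∀ i, P i * P i = P i) ∧
    (∀ i k, i ≠ k → P i * P k = 0) ∧ (∑ i, P i = 1)

/-- A density matrix: positive semidefinite with unit trace. -/
def IsDensity {d : ℕ} (ρ : Matrix (Fin d) (Fin d) ℂ) : Prop :=
  ρ.PosSemidef ∧ ρ.trace = 1

/-- The measurement channel `E^A(ρ) = Σ_i P_i ρ P_i` of a projective observable. -/
def measChannel {d r : ℕ} (P : Fin r → Matrix (Fin d) (Fin d) ℂ)
    (ρ : Matrix (Fin d) (Fin d) ℂ) : Matrix (Fin d) (Fin d) ℂ :=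
  ∑ i, P i * ρ * P i

/-- `p^B_ρ(j) = tr(P^B_j ρ)`. -/
def probB {d rB : ℕ} (Q : Fin rB → Matrix (Fin d) (Fin d) ℂ)
    (ρ : Matrix (Fin d) (Fin d) ℂ) (j : Fin rB) : ℝ :=
  ((Q j * ρ).trace).re

/-- `q^{A→B}_ρ(j) = tr(P^B_j Σ_i P^A_i ρ P^A_i)`. -/
def probAB {d rA rB : ℕ} (P : Fin rA → Matrix (Fin d) (Fin d) ℂ)
    (Q : Fin rB → Matrix (Fin d) (Fin d) ℂ)
    (ρ : Matrix (Fin d) (Fin d) ℂ) (j : Fin rB) : ℝ :=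
  ((Q j * measChannel P ρ).trace).re

open Classical in
/-- The positive semidefinite square root of a PSD matrix (junk value `0` otherwise). -/
noncomputable def msqrt {d : ℕ} (A : Matrix (Fin d) (Fin d) ℂ) :
    Matrix (Fin d) (Fin d) ℂ :=
  if h : A.PosSemidef then (h.1.eigenvectorUnitary : Matrix (Fin d) (Fin d) ℂ) *
    diagonal (fun i => ((√(h.1.eigenvalues i) : ℝ) : ℂ)) *
    (star h.1.eigenvectorUnitary : Matrix (Fin d) (Fin d) ℂ) else 0

/-- `|X| = √(Xᴴ X)`, the positive semidefinite absolute value of a matrix. -/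
noncomputable def matAbs {d : ℕ} (X : Matrix (Fin d) (Fin d) ℂ) :
    Matrix (Fin d) (Fin d) ℂ :=
  msqrt (Xᴴ * X)

/-- The quantum fidelity `F(ρ,σ) = tr √(√ρ σ √ρ)`. -/
noncomputable def qFid {d : ℕ} (ρ σ : Matrix (Fin d) (Fin d) ℂ) : ℝ :=
  ((msqrt (msqrt ρ * σ * msqrt ρ)).trace).re

/-- Variational distance `D_1(p,q) = (1/2) Σ_j |p_j − q_j|`. -/
def distL1 {rB : ℕ} (p q : Fin rB → ℝ) : ℝ := (1 / 2) * ∑ j, |p j - q j|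

/-- Chebyshev distance `D_∞(p,q) = max_j |p_j − q_j|`. -/
noncomputable def distLinf {rB : ℕ} (p q : Fin rB → ℝ) : ℝ := ⨆ j, |p j - q j|

/-- Classical fidelity `F(p,q) = Σ_j √(p_j q_j)`. -/
noncomputable def classFid {rB : ℕ} (p q : Fin rB → ℝ) : ℝ :=
  ∑ j, Real.sqrt (p j * q j)

/-- `Q_1(A→B)`. -/
noncomputable def Q1 {d rA rB : ℕ} (P : Fin rA → Matrix (Fin d) (Fin d) ℂ)
    (Q : Fin rB → Matrix (Fin d) (Fin d) ℂ) : ℝ :=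
  sSup {x : ℝ | ∃ ρ, IsDensity ρ ∧ x = distL1 (probAB P Q ρ) (probB Q ρ)}

/-- `Q_∞(A→B)`. -/
noncomputable def Qinf {d rA rB : ℕ} (P : Fin rA → Matrix (Fin d) (Fin d) ℂ)
    (Q : Fin rB → Matrix (Fin d) (Fin d) ℂ) : ℝ :=
  sSup {x : ℝ | ∃ ρ, IsDensity ρ ∧ x = distLinf (probAB P Q ρ) (probB Q ρ)}

/-- `Q_F(A→B)`. -/
noncomputable def QF {d rA rB : ℕ} (P : Fin rA → Matrix (Fin d) (Fin d) ℂ)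
    (Q : Fin rB → Matrix (Fin d) (Fin d) ℂ) : ℝ :=
  sSup {x : ℝ | ∃ ρ, IsDensity ρ ∧
    x = 1 - (classFid (probAB P Q ρ) (probB Q ρ)) ^ 2}

/-- The rank-one projection `|v⟩⟨v|` onto a (unit) vector `v`. -/
def proj {d : ℕ} (v : Fin d → ℂ) : Matrix (Fin d) (Fin d) ℂ :=
  Matrix.vecMulVec v (star v)

/-! For a positive semidefinite `2 × 2` matrix `T`, `(tr T)² = tr (T²) + 2 det T`; applied to
`T = √(√σ ρ √σ)` this gives `F(σ, ρ)² = tr (σ ρ) + 2 √(det σ · det ρ)`. Writing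
`ρ = [[a, c], [c̄, d]]`, the phase-flip channel only multiplies `c` by `1 - 2p`, so
`det Φ(ρ) ≥ det ρ ≥ 0` and `F(Φ(ρ), ρ)² ≥ tr (Φ(ρ) ρ) + 2 det ρ = 1 - 4p|c|² ≥ 1 - p`, because
`|c|² ≤ a d ≤ 1/4`. The state `|+⟩⟨+|`, with `|c|² = 1/4` and `det ρ = 0`, attains the bound. -/

section SquareRoot

variable {d : ℕ} {A : Matrix (Fin d) (Fin d) ℂ}

lemma msqrt_posSemidef (hA : A.PosSemidef) : (msqrt A).PosSemidef := by
  rw [msqrt, dif_pos hA]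
  exact (posSemidef_diagonal_iff.mpr fun i => Complex.zero_le_real.mpr (Real.sqrt_nonneg _))
    |>.mul_mul_conjTranspose_same _

lemma msqrt_mul_self (hA : A.PosSemidef) : msqrt A * msqrt A = A := by
  rw [msqrt, dif_pos hA]
  set U : Matrix (Fin d) (Fin d) ℂ := ↑hA.1.eigenvectorUnitary
  set D := diagonal fun i => ((√(hA.1.eigenvalues i) : ℝ) : ℂ)
  have hU : star U * U = 1 := by simp [U]
  have hspec := hA.1.spectral_theorem
  rw [Unitary.conjStarAlgAut_apply] at hspec
  have hDD : D * D = diagonal fun i => ((hA.1.eigenvalues i : ℝ) : ℂ) := by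
    simp_rw [D, diagonal_mul_diagonal, ← Complex.ofReal_mul,
      Real.mul_self_sqrt (hA.eigenvalues_nonneg _)]
  calc U * D * star U * (U * D * star U) = U * (D * (star U * U) * D) * star U := by
        simp only [Matrix.mul_assoc]
    _ = A := by rw [hU, Matrix.mul_one, hDD]; exact hspec.symm

end SquareRoot

lemma posSemidef_msqrt_mul_mul_msqrt {d : ℕ} {A B : Matrix (Fin d) (Fin d) ℂ}
    (hA : A.PosSemidef) (hB : B.PosSemidef) : (msqrt A * B * msqrt A).PosSemidef := by
  simpa only [(msqrt_posSemidef hA).1.eq] using hB.conjTranspose_mul_mul_same (msqrt A)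

lemma qFid_nonneg {d : ℕ} {A B : Matrix (Fin d) (Fin d) ℂ}
    (hA : A.PosSemidef) (hB : B.PosSemidef) : 0 ≤ qFid A B :=
  (Complex.nonneg_iff.mp
    (msqrt_posSemidef (posSemidef_msqrt_mul_mul_msqrt hA hB)).trace_nonneg).1

lemma Matrix.trace_sq_fin_two {R : Type*} [CommRing R] (S : Matrix (Fin 2) (Fin 2) R) :
    S.trace ^ 2 = (S * S).trace + 2 * S.det := by
  simp only [trace_fin_two, det_fin_two, mul_apply, Fin.sum_univ_two]
  ring

lemma Complex.eq_re_of_nonneg {z : ℂ} (hz : 0 ≤ z) : z = z.re :=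
  Complex.eq_re_of_ofReal_le (r := 0) (by simpa using hz)

theorem sq_qFid_fin_two {A B : Matrix (Fin 2) (Fin 2) ℂ}
    (hA : A.PosSemidef) (hB : B.PosSemidef) :
    qFid A B ^ 2 = (A * B).trace.re + 2 * √(A.det.re * B.det.re) := by
  have hN := posSemidef_msqrt_mul_mul_msqrt hA hB
  set T := msqrt (msqrt A * B * msqrt A)
  have hT : T.PosSemidef := msqrt_posSemidef hN
  have htrace : T.trace ^ 2 = (A * B).trace + 2 * T.det := by
    rw [trace_sq_fin_two, msqrt_mul_self hN, trace_mul_cycle, msqrt_mul_self hA]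
  have hdet : T.det ^ 2 = A.det * B.det := by
    rw [sq, ← det_mul, msqrt_mul_self hN, det_mul, det_mul, mul_right_comm, ← det_mul,
      msqrt_mul_self hA]
  have hdet_re : T.det.re = √(A.det.re * B.det.re) := by
    rw [← Real.sqrt_sq (Complex.nonneg_iff.mp hT.det_nonneg).1]
    congr 1
    apply Complex.ofReal_injective
    push_cast
    rw [← Complex.eq_re_of_nonneg hT.det_nonneg, ← Complex.eq_re_of_nonneg hA.det_nonneg,
      ← Complex.eq_re_of_nonneg hB.det_nonneg, hdet]
  show T.trace.re ^ 2 = _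
  rw [← hdet_re]
  have := congrArg Complex.re htrace
  rw [Complex.eq_re_of_nonneg hT.trace_nonneg] at this
  simpa [← Complex.ofReal_pow] using this

def pauliZ : Matrix (Fin 2) (Fin 2) ℂ := diagonal ![1, -1]

def phaseFlip (p : ℝ) (ρ : Matrix (Fin 2) (Fin 2) ℂ) : Matrix (Fin 2) (Fin 2) ℂ :=
  (p : ℂ) • (pauliZ * ρ * pauliZ) + (1 - (p : ℂ)) • ρ

lemma pauliZ_conjTranspose : pauliZᴴ = pauliZ := by
  simp [pauliZ, diagonal_conjTranspose]

lemma Matrix.PosSemidef.phaseFlip {p : ℝ} (hp0 : 0 ≤ p) (hp1 : p ≤ 1)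
    {ρ : Matrix (Fin 2) (Fin 2) ℂ} (hρ : ρ.PosSemidef) : (phaseFlip p ρ).PosSemidef := by
  have hZ := hρ.conjTranspose_mul_mul_same pauliZ
  rw [pauliZ_conjTranspose] at hZ
  refine (hZ.smul ?_).add (hρ.smul ?_)
  · exact_mod_cast hp0
  · exact_mod_cast sub_nonneg.mpr hp1

lemma Matrix.IsHermitian.exists_eq_fin_two {ρ : Matrix (Fin 2) (Fin 2) ℂ} (h : ρ.IsHermitian) :
    ∃ (a d : ℝ) (c : ℂ), ρ = !![(a : ℂ), c; star c, (d : ℂ)] :=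
  ⟨(ρ 0 0).re, (ρ 1 1).re, ρ 0 1, by
    ext i j
    fin_cases i <;> fin_cases j
    exacts [(h.coe_re_apply_self 0).symm, rfl, (h.apply 1 0).symm, (h.coe_re_apply_self 1).symm]⟩

lemma det_fin_two_hermitian (a d : ℝ) (c : ℂ) :
    (!![(a : ℂ), c; star c, (d : ℂ)]).det = ((a * d - Complex.normSq c : ℝ) : ℂ) := by
  rw [det_fin_two_of, Complex.ofReal_sub, Complex.normSq_eq_conj_mul_self, Complex.star_def]
  push_cast
  ring

lemma phaseFlip_fin_two_hermitian (p a d : ℝ) (c : ℂ) :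
    phaseFlip p !![(a : ℂ), c; star c, (d : ℂ)] =
      !![(a : ℂ), ((1 - 2 * p : ℝ) : ℂ) * c; star (((1 - 2 * p : ℝ) : ℂ) * c), (d : ℂ)] := by
  ext i j
  fin_cases i <;> fin_cases j <;> simp [phaseFlip, pauliZ] <;> ring

theorem sq_qFid_phaseFlip {p : ℝ} (hp0 : 0 ≤ p) (hp1 : p ≤ 1) {a d : ℝ} {c : ℂ}
    (hρ : (!![(a : ℂ), c; star c, (d : ℂ)]).PosSemidef) :
    qFid (phaseFlip p !![(a : ℂ), c; star c, (d : ℂ)]) !![(a : ℂ), c; star c, (d : ℂ)] ^ 2 =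
      a ^ 2 + d ^ 2 + 2 * (1 - 2 * p) * Complex.normSq c +
        2 * √((a * d - (1 - 2 * p) ^ 2 * Complex.normSq c) * (a * d - Complex.normSq c)) := by
  rw [sq_qFid_fin_two (hρ.phaseFlip hp0 hp1) hρ, phaseFlip_fin_two_hermitian,
    det_fin_two_hermitian, det_fin_two_hermitian]
  simp [trace_fin_two, Complex.normSq_apply]
  ring_nf

theorem one_sub_le_sq_qFid_phaseFlip {p : ℝ} (hp0 : 0 ≤ p) (hp1 : p ≤ 1)
    {ρ : Matrix (Fin 2) (Fin 2) ℂ} (hρ : IsDensity ρ) : 1 - p ≤ qFid (phaseFlip p ρ) ρ ^ 2 := by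
  obtain ⟨hpsd, htr⟩ := hρ
  obtain ⟨a, d, c, rfl⟩ := hpsd.1.exists_eq_fin_two
  rw [sq_qFid_phaseFlip hp0 hp1 hpsd]
  set s := Complex.normSq c
  have had : a + d = 1 := by
    simpa [trace_fin_two] using congrArg Complex.re htr
  have hdet : 0 ≤ a * d - s := by
    have := (Complex.nonneg_iff.mp hpsd.det_nonneg).1
    rwa [det_fin_two_hermitian, Complex.ofReal_re] at this
  have h4s : 4 * s ≤ 1 := by nlinarith [sq_nonneg (a - d)]
  have hq : (1 - 2 * p) ^ 2 ≤ 1 := by nlinarith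
  have hsqrt : a * d - s ≤ √((a * d - (1 - 2 * p) ^ 2 * s) * (a * d - s)) := by
    calc a * d - s = √((a * d - s) * (a * d - s)) := (Real.sqrt_mul_self hdet).symm
      _ ≤ _ := Real.sqrt_le_sqrt (mul_le_mul_of_nonneg_right
          (by nlinarith [mul_le_mul_of_nonneg_right hq (Complex.normSq_nonneg c)]) hdet)
  nlinarith [mul_nonneg hp0 (sub_nonneg.mpr h4s)]

def plusState : Matrix (Fin 2) (Fin 2) ℂ := (2⁻¹ : ℂ) • proj ![1, 1]

lemma plusState_apply (i j : Fin 2) : plusState i j = 2⁻¹ := by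
  simp only [plusState, proj, Matrix.smul_apply, vecMulVec_apply, Pi.star_apply]
  fin_cases i <;> fin_cases j <;> simp

lemma isDensity_plusState : IsDensity plusState := by
  refine ⟨(posSemidef_vecMulVec_self_star _).smul (by positivity), ?_⟩
  rw [trace_fin_two, plusState_apply, plusState_apply]
  norm_num

lemma plusState_eq : plusState =
    !![((2⁻¹ : ℝ) : ℂ), ((2⁻¹ : ℝ) : ℂ); star ((2⁻¹ : ℝ) : ℂ), ((2⁻¹ : ℝ) : ℂ)] := by
  ext i j
  fin_cases i <;> fin_cases j <;> simp [plusState_apply]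

theorem sq_qFid_phaseFlip_plusState {p : ℝ} (hp0 : 0 ≤ p) (hp1 : p ≤ 1) :
    qFid (phaseFlip p plusState) plusState ^ 2 = 1 - p := by
  have hpsd := isDensity_plusState.1
  rw [plusState_eq] at hpsd ⊢
  rw [sq_qFid_phaseFlip hp0 hp1 hpsd]
  simp only [Complex.normSq_ofReal, sub_self, mul_zero, Real.sqrt_zero]
  ring

theorem isLeast_sq_qFid_phaseFlip {p : ℝ} (hp0 : 0 ≤ p) (hp1 : p ≤ 1) :
    IsLeast {x | ∃ ρ, IsDensity ρ ∧ x = qFid (phaseFlip p ρ) ρ ^ 2} (1 - p) :=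
  ⟨⟨plusState, isDensity_plusState, (sq_qFid_phaseFlip_plusState hp0 hp1).symm⟩,
    by rintro _ ⟨ρ, hρ, rfl⟩; exact one_sub_le_sq_qFid_phaseFlip hp0 hp1 hρ⟩

theorem isLeast_qFid_phaseFlip {p : ℝ} (hp0 : 0 ≤ p) (hp1 : p ≤ 1) :
    IsLeast {x | ∃ ρ, IsDensity ρ ∧ x = qFid (phaseFlip p ρ) ρ} √(1 - p) := by
  have hF {ρ} (hρ : IsDensity ρ) : 0 ≤ qFid (phaseFlip p ρ) ρ :=
    qFid_nonneg (hρ.1.phaseFlip hp0 hp1) hρ.1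
  refine ⟨⟨plusState, isDensity_plusState, ?_⟩, ?_⟩
  · rw [← sq_qFid_phaseFlip_plusState hp0 hp1, Real.sqrt_sq (hF isDensity_plusState)]
  · rintro _ ⟨ρ, hρ, rfl⟩
    exact (Real.sqrt_le_left (hF hρ)).mpr (one_sub_le_sq_qFid_phaseFlip hp0 hp1 hρ)

theorem stmt_18 (p : ℝ) (hp0 : 0 ≤ p) (hp1 : p ≤ 1) :
    (sInf {x : ℝ | ∃ ρ : Matrix (Fin 2) (Fin 2) ℂ, IsDensity ρ ∧
        x = (qFid ((p : ℂ) • (Matrix.diagonal ![1, -1] * ρ * Matrix.diagonal ![1, -1]) +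
              (1 - (p : ℂ)) • ρ) ρ) ^ 2} = 1 - p) ∧
      1 - (sInf {x : ℝ | ∃ ρ : Matrix (Fin 2) (Fin 2) ℂ, IsDensity ρ ∧
        x = qFid ((p : ℂ) • (Matrix.diagonal ![1, -1] * ρ * Matrix.diagonal ![1, -1]) +
              (1 - (p : ℂ)) • ρ) ρ}) ^ 2 = p := by
  have hinf := (isLeast_qFid_phaseFlip hp0 hp1).csInf_eq
  dsimp only [phaseFlip, pauliZ] at hinf
  refine ⟨(isLeast_sq_qFid_phaseFlip hp0 hp1).csInf_eq, ?_⟩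
  rw [hinf, Real.sq_sqrt (sub_nonneg.mpr hp1)]
  ring

end
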